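/- Let Z be a set of T distinct datapoints, W ⊆ ℝ^d closed convex with diameter at most D, each f(·;z) G-Lipschitz and β-smooth, F(w) := (1/T)∑_{z∈Z} f(w;z) λ-strongly convex with minimizer w*, and κ := β/λ. Run SGD-without-replacement with step sizes η_t = min{ λ/(2β²), 4/(λt) } for τ = T/(2κ) rounds on a random order sequence z_1,…,z_T ∼ 𝒵(T), i.e., w_{t+1} = Π_W(w_t − η_t ∇f(w_t; z_t)). Then for all t ≤ τ, the gradient-bias error satisfies E[ (∇F(w_t) − ∇f(w_t; z_t))ᵀ(w_t − w*) ] ≤ 8G(G + βD)/(λT). -/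

import Mathlib

/-!
Write `∇F(w_t)` as the average over positions `j` of `∇f(w_t; σ j)`. Relabelling `σ` by the
transposition of `j` and `t - 1` turns the bias into the average over `j` of
`E[h(w'_t) - h(w_t)]`, where `w'` is the trajectory run on `σ ∘ (j t-1)` and
`h(w) = ⟪∇f(w; z_t), w - w*⟫` is `(G + βD)`-Lipschitz on `W`. For `j ≥ t - 1` both trajectories
coincide. For `j < t - 1` they are at most `2Gη_{j+1}` apart after round `j + 1`, and from then on
their mean-square distance contracts by `(1 - λη_r/4)²` per round: averaged over the still unseen
data points, a step is a gradient step on the strongly convex `F`, up to the `≤ rβ` contribution of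
the `r` excluded points, which stays below `Tλ/2` as long as `t ≤ τ`. The resulting bounds
`2Gη_{j+1} ∏_r (1 - λη_r/4)` telescope to at most `8G/λ`.
-/

/-- `F` is `μ`-strongly convex on `W` (via its gradient). -/
def StrongConvexOnSet {d : ℕ} (W : Set (EuclideanSpace ℝ (Fin d))) (μ : ℝ)
    (F : EuclideanSpace ℝ (Fin d) → ℝ) : Prop :=
  ∀ x ∈ W, ∀ y ∈ W,
    F x + (inner ℝ (gradient F x) (y - x) : ℝ) + μ / 2 * ‖y - x‖ ^ 2 ≤ F y

/-- `gdIter proj f η zs w1 m` is the iterate `w_{m+1}` obtained by `m` projected gradient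
steps `w_{t+1} = Π(w_t - η_t ∇f(w_t; z_t))` on the datapoint sequence `zs`, from `w1`. -/
noncomputable def gdIter {d : ℕ} {Z : Type*}
    (proj : EuclideanSpace ℝ (Fin d) → EuclideanSpace ℝ (Fin d))
    (f : EuclideanSpace ℝ (Fin d) → Z → ℝ) (η : ℕ → ℝ) (zs : ℕ → Z)
    (w1 : EuclideanSpace ℝ (Fin d)) : ℕ → EuclideanSpace ℝ (Fin d)
  | 0 => w1
  | t + 1 => proj (gdIter proj f η zs w1 t
      - η (t + 1) • gradient (fun u => f u (zs (t + 1))) (gdIter proj f η zs w1 t))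

/-- `ordSeq hT σ t` is the `t`-th datapoint `z_t = σ(t)` of the random-order sequence
induced by the permutation `σ` (rounds are 1-indexed). -/
def ordSeq {T : ℕ} (hT : 0 < T) (σ : Equiv.Perm (Fin T)) : ℕ → Fin T :=
  fun t => σ ⟨(t - 1) % T, Nat.mod_lt _ hT⟩

open Finset
open scoped InnerProductSpace Nat

theorem sum_mul_prod_one_sub {R : Type*} [CommRing R] (x : ℕ → R) (m : ℕ) :
    ∑ q ∈ range m, x (q + 1) * ∏ r ∈ Icc (q + 2) m, (1 - x r)
      = 1 - ∏ r ∈ Icc 1 m, (1 - x r) := by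
  induction m with
  | zero => simp
  | succ m ih =>
    have hsplit : ∑ q ∈ range m, x (q + 1) * ∏ r ∈ Icc (q + 2) (m + 1), (1 - x r)
        = (∑ q ∈ range m, x (q + 1) * ∏ r ∈ Icc (q + 2) m, (1 - x r)) * (1 - x (m + 1)) := by
      rw [sum_mul]
      refine sum_congr rfl fun q hq => ?_
      rw [prod_Icc_succ_top (by simp only [mem_range] at hq; omega), mul_assoc]
    rw [sum_range_succ, hsplit, ih, Icc_eq_empty (by omega : ¬m + 2 ≤ m + 1), prod_empty,
      prod_Icc_succ_top (by omega : 1 ≤ m + 1)]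
    ring

theorem sum_mul_prod_one_sub_le {μ : ℝ} (hμ : 0 < μ) {x : ℕ → ℝ} (hμx : ∀ r, μ * x r ≤ 4)
    (n : ℕ) : ∑ q ∈ range n, x (q + 1) * ∏ r ∈ Icc (q + 2) n, (1 - μ * x r / 4) ≤ 4 / μ := by
  have hprod : 0 ≤ ∏ r ∈ Icc 1 n, (1 - μ * x r / 4) :=
    prod_nonneg fun r _ => by linarith [hμx r]
  calc ∑ q ∈ range n, x (q + 1) * ∏ r ∈ Icc (q + 2) n, (1 - μ * x r / 4)
      = 4 / μ * ∑ q ∈ range n, μ * x (q + 1) / 4 * ∏ r ∈ Icc (q + 2) n, (1 - μ * x r / 4) := by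
        rw [mul_sum]
        refine sum_congr rfl fun q _ => ?_
        field_simp
    _ = 4 / μ * (1 - ∏ r ∈ Icc 1 n, (1 - μ * x r / 4)) := by
        rw [sum_mul_prod_one_sub (fun r => μ * x r / 4)]
    _ ≤ 4 / μ := mul_le_of_le_one_right (by positivity) (by linarith)

section StepSize

variable {lam β : ℝ} {η : ℕ → ℝ}

theorem step_nonneg (hlam : 0 < lam)
    (hη : ∀ t : ℕ, η t = min (lam / (2 * β ^ 2)) (4 / (lam * t))) (r : ℕ) : 0 ≤ η r := by
  rw [hη]; positivity

theorem step_mul_sq_le (hβ : 0 < β)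
    (hη : ∀ t : ℕ, η t = min (lam / (2 * β ^ 2)) (4 / (lam * t))) (r : ℕ) :
    η r * β ^ 2 ≤ lam / 2 := by
  rw [← le_div_iff₀ (by positivity), div_div, hη]
  exact min_le_left _ _

theorem mul_step_le_four (hlam : 0 < lam)
    (hη : ∀ t : ℕ, η t = min (lam / (2 * β ^ 2)) (4 / (lam * t))) (r : ℕ) : lam * η r ≤ 4 := by
  have hr : (4 : ℝ) / r ≤ 4 := by
    rcases r.eq_zero_or_pos with rfl | hr
    · simp
    · exact div_le_self (by norm_num) (by exact_mod_cast hr)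
  calc lam * η r ≤ lam * (4 / (lam * r)) := by gcongr; rw [hη]; exact min_le_right _ _
    _ = 4 / r := by rw [mul_div_assoc', mul_div_mul_left _ _ hlam.ne']
    _ ≤ 4 := hr

theorem mul_le_of_le_div_two_mul_div (hβ : 0 < β) (hlam : 0 < lam) {t T : ℝ}
    (ht : t ≤ T / (2 * (β / lam))) : t * β ≤ T * lam / 2 := calc
  t * β = t * (2 * (β / lam)) * (lam / 2) := by field_simp
  _ ≤ T * (lam / 2) := by gcongr; exact (le_div_iff₀ (by positivity)).1 ht
  _ = T * lam / 2 := by ring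

end StepSize

section InnerProduct

variable {F : Type*} [NormedAddCommGroup F] [InnerProductSpace ℝ F]

theorem real_inner_sub_proj_nonpos {W : Set F} {proj : F → F} (hW : Convex ℝ W)
    (hproj : ∀ x, proj x ∈ W ∧ ∀ w ∈ W, ‖x - proj x‖ ≤ ‖x - w‖) (x : F) {w : F} (hw : w ∈ W) :
    ⟪x - proj x, w - proj x⟫_ℝ ≤ 0 := by
  have : Nonempty W := ⟨⟨proj x, (hproj x).1⟩⟩
  refine (norm_eq_iInf_iff_real_inner_le_zero hW (hproj x).1).1 ?_ w hw
  exact le_antisymm (le_ciInf fun w => (hproj x).2 w w.2)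
    (ciInf_le ⟨0, by rintro _ ⟨w, rfl⟩; positivity⟩ (⟨proj x, (hproj x).1⟩ : W))

theorem norm_proj_sub_proj_le {W : Set F} {proj : F → F} (hW : Convex ℝ W)
    (hproj : ∀ x, proj x ∈ W ∧ ∀ w ∈ W, ‖x - proj x‖ ≤ ‖x - w‖) (a b : F) :
    ‖proj a - proj b‖ ≤ ‖a - b‖ := by
  have ha := real_inner_sub_proj_nonpos hW hproj a (hproj b).1
  have hb := real_inner_sub_proj_nonpos hW hproj b (hproj a).1
  have key : ‖proj a - proj b‖ ^ 2 ≤ ‖a - b‖ * ‖proj a - proj b‖ := calc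
    ‖proj a - proj b‖ ^ 2
      = ⟪a - b, proj a - proj b⟫_ℝ + ⟪a - proj a, proj b - proj a⟫_ℝ
          + ⟪b - proj b, proj a - proj b⟫_ℝ := by
        rw [← real_inner_self_eq_norm_sq]
        simp only [inner_sub_left, inner_sub_right]
        ring
    _ ≤ ⟪a - b, proj a - proj b⟫_ℝ := by linarith
    _ ≤ ‖a - b‖ * ‖proj a - proj b‖ := real_inner_le_norm _ _
  nlinarith [norm_nonneg (proj a - proj b), norm_nonneg (a - b)]

theorem sum_norm_sub_smul_sq_le {ι : Type*} (J : Finset ι) (e : F) (v : ι → F) {η β μ : ℝ}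
    (hv : ∀ j ∈ J, ‖v j‖ ≤ β * ‖e‖) (hinner : #J * μ / 2 * ‖e‖ ^ 2 ≤ ⟪e, ∑ j ∈ J, v j⟫_ℝ)
    (hη : 0 ≤ η) (hηβ : η * β ^ 2 ≤ μ / 2) :
    ∑ j ∈ J, ‖e - η • v j‖ ^ 2 ≤ #J * ((1 - μ * η / 4) ^ 2 * ‖e‖ ^ 2) := by
  have hsq : ∑ j ∈ J, ‖v j‖ ^ 2 ≤ #J * (β ^ 2 * ‖e‖ ^ 2) := by
    rw [← nsmul_eq_mul, ← sum_const]
    gcongr with j hj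
    nlinarith [hv j hj, norm_nonneg (v j)]
  have hexpand : ∑ j ∈ J, ‖e - η • v j‖ ^ 2
      = #J * ‖e‖ ^ 2 - 2 * η * ⟪e, ∑ j ∈ J, v j⟫_ℝ + η ^ 2 * ∑ j ∈ J, ‖v j‖ ^ 2 := by
    simp only [norm_sub_sq_real, real_inner_smul_right, norm_smul, Real.norm_eq_abs, mul_pow,
      sq_abs, sum_add_distrib, sum_sub_distrib, sum_const, nsmul_eq_mul, ← mul_sum, inner_sum]
    ring
  rw [hexpand]
  nlinarith [mul_le_mul_of_nonneg_left hinner (by linarith : (0:ℝ) ≤ 2 * η),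
    mul_le_mul_of_nonneg_left hsq (sq_nonneg η), sq_nonneg (μ * η),
    mul_nonneg (mul_nonneg (Nat.cast_nonneg #J) (sq_nonneg ‖e‖)) (sq_nonneg (μ * η)),
    mul_nonneg (mul_nonneg (Nat.cast_nonneg #J) (sq_nonneg ‖e‖))
      (mul_nonneg hη (by linarith : (0:ℝ) ≤ μ / 2 - η * β ^ 2))]

theorem inner_sub_inner_le {g g' x x' c : F} {G β D : ℝ} (hg : ‖g‖ ≤ G)
    (hgg' : ‖g' - g‖ ≤ β * ‖x' - x‖) (hx' : ‖x' - c‖ ≤ D) :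
    ⟪g', x' - c⟫_ℝ - ⟪g, x - c⟫_ℝ ≤ (G + β * D) * ‖x' - x‖ := calc
  ⟪g', x' - c⟫_ℝ - ⟪g, x - c⟫_ℝ = ⟪g' - g, x' - c⟫_ℝ + ⟪g, x' - x⟫_ℝ := by
    simp only [inner_sub_left, inner_sub_right]; ring
  _ ≤ β * ‖x' - x‖ * D + G * ‖x' - x‖ := by
    gcongr
    · exact (real_inner_le_norm _ _).trans
        (mul_le_mul hgg' hx' (norm_nonneg _) ((norm_nonneg _).trans hgg'))
    · exact (real_inner_le_norm _ _).trans (by gcongr)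
  _ = (G + β * D) * ‖x' - x‖ := by ring

theorem gradient_const_mul_sum [CompleteSpace F] {ι : Type*} [Fintype ι] (c : ℝ)
    {f : F → ι → ℝ} (hf : ∀ i, Differentiable ℝ (fun w => f w i)) (x : F) :
    gradient (fun u => c * ∑ i, f u i) x = c • ∑ i, gradient (fun u => f u i) x := by
  have hfd : fderiv ℝ (fun u => c * ∑ i, f u i) x = c • ∑ i, fderiv ℝ (fun u => f u i) x := by
    rw [fderiv_const_mul (Differentiable.fun_sum fun i _ => hf i).differentiableAt,
      fderiv_fun_sum fun i _ => (hf i).differentiableAt]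
  simp only [gradient, hfd, map_smul, map_sum]

theorem sum_perm_inner_gradient_avg_sub_eq [CompleteSpace F] {T : ℕ} {f : F → Fin T → ℝ}
    (hf : ∀ z, Differentiable ℝ (fun w => f w z)) (x : Equiv.Perm (Fin T) → F) (b : Fin T)
    (c : F) :
    ∑ σ : Equiv.Perm (Fin T), ⟪gradient (fun u => (1 / T : ℝ) * ∑ z, f u z) (x σ)
        - gradient (fun u => f u (σ b)) (x σ), x σ - c⟫_ℝ
      = 1 / T * ∑ j : Fin T, ∑ σ : Equiv.Perm (Fin T),
          (⟪gradient (fun u => f u (σ b)) (x (σ * Equiv.swap j b)),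
              x (σ * Equiv.swap j b) - c⟫_ℝ
            - ⟪gradient (fun u => f u (σ b)) (x σ), x σ - c⟫_ℝ) := by
  have hT : (T : ℝ) ≠ 0 := Nat.cast_ne_zero.2 b.pos.ne'
  have hσ : ∀ σ : Equiv.Perm (Fin T),
      ⟪gradient (fun u => (1 / T : ℝ) * ∑ z, f u z) (x σ)
        - gradient (fun u => f u (σ b)) (x σ), x σ - c⟫_ℝ
      = 1 / T * ∑ j : Fin T, (⟪gradient (fun u => f u (σ j)) (x σ), x σ - c⟫_ℝ
          - ⟪gradient (fun u => f u (σ b)) (x σ), x σ - c⟫_ℝ) := by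
    intro σ
    rw [gradient_const_mul_sum _ hf, inner_sub_left, real_inner_smul_left, sum_inner,
      ← Equiv.sum_comp σ, sum_sub_distrib, sum_const, card_univ, Fintype.card_fin, nsmul_eq_mul]
    field_simp
  have hswap : ∀ j : Fin T,
      ∑ σ : Equiv.Perm (Fin T), ⟪gradient (fun u => f u (σ j)) (x σ), x σ - c⟫_ℝ
        = ∑ σ : Equiv.Perm (Fin T), ⟪gradient (fun u => f u (σ b)) (x (σ * Equiv.swap j b)),
            x (σ * Equiv.swap j b) - c⟫_ℝ := by
    intro j
    rw [← Equiv.sum_comp (Equiv.mulRight (Equiv.swap j b))]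
    simp
  rw [sum_congr rfl fun σ _ => hσ σ, ← mul_sum, sum_comm]
  congr 1
  refine sum_congr rfl fun j _ => ?_
  rw [sum_sub_distrib, sum_sub_distrib, hswap]

theorem sum_perm_inner_gradient_avg_sub_le [CompleteSpace F] {T : ℕ} {f : F → Fin T → ℝ}
    {W : Set F} {G β D : ℝ} (hf : ∀ z, Differentiable ℝ (fun w => f w z))
    (hLip : ∀ z, ∀ w ∈ W, ‖gradient (fun u => f u z) w‖ ≤ G)
    (hsmooth : ∀ z, ∀ x ∈ W, ∀ y ∈ W,
      ‖gradient (fun u => f u z) x - gradient (fun u => f u z) y‖ ≤ β * ‖x - y‖)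
    (hdiam : ∀ x ∈ W, ∀ y ∈ W, ‖x - y‖ ≤ D) {x : Equiv.Perm (Fin T) → F} (hx : ∀ σ, x σ ∈ W)
    (b : Fin T) {c : F} (hc : c ∈ W) :
    ∑ σ : Equiv.Perm (Fin T), ⟪gradient (fun u => (1 / T : ℝ) * ∑ z, f u z) (x σ)
        - gradient (fun u => f u (σ b)) (x σ), x σ - c⟫_ℝ
      ≤ 1 / T * (G + β * D)
          * ∑ j : Fin T, ∑ σ : Equiv.Perm (Fin T), ‖x (σ * Equiv.swap j b) - x σ‖ := by
  rw [sum_perm_inner_gradient_avg_sub_eq hf x b c, mul_assoc, mul_sum (a := G + β * D)]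
  gcongr with j _
  rw [mul_sum]
  exact sum_le_sum fun σ _ => inner_sub_inner_le (hLip _ _ (hx σ))
    (hsmooth _ _ (hx _) _ (hx σ)) (hdiam _ (hx _) _ hc)

end InnerProduct

theorem StrongConvexOnSet.mul_sq_le_inner_gradient_sub {d : ℕ}
    {W : Set (EuclideanSpace ℝ (Fin d))} {μ : ℝ} {F : EuclideanSpace ℝ (Fin d) → ℝ}
    (hF : StrongConvexOnSet W μ F) {x y : EuclideanSpace ℝ (Fin d)} (hx : x ∈ W) (hy : y ∈ W) :
    μ * ‖x - y‖ ^ 2 ≤ ⟪gradient F x - gradient F y, x - y⟫_ℝ := by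
  have hxy := hF x hx y hy
  have hyx := hF y hy x hx
  rw [← neg_sub x y, inner_neg_right, norm_neg] at hxy
  rw [inner_sub_left]
  linarith

theorem StrongConvexOnSet.mul_sq_le_inner_sum_gradient_sub {d T : ℕ}
    {W : Set (EuclideanSpace ℝ (Fin d))} {μ : ℝ} {f : EuclideanSpace ℝ (Fin d) → Fin T → ℝ}
    (hf : ∀ z, Differentiable ℝ (fun w => f w z)) (hT : T ≠ 0)
    (hF : StrongConvexOnSet W μ (fun w => (1 / T : ℝ) * ∑ z, f w z))
    {x y : EuclideanSpace ℝ (Fin d)} (hx : x ∈ W) (hy : y ∈ W) :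
    T * μ * ‖x - y‖ ^ 2
      ≤ ⟪x - y, ∑ z, (gradient (fun u => f u z) x - gradient (fun u => f u z) y)⟫_ℝ := by
  have h := hF.mul_sq_le_inner_gradient_sub hx hy
  rw [gradient_const_mul_sum _ hf, gradient_const_mul_sum _ hf, ← smul_sub,
    ← sum_sub_distrib, real_inner_smul_left, real_inner_comm] at h
  calc T * μ * ‖x - y‖ ^ 2 = T * (μ * ‖x - y‖ ^ 2) := by ring
    _ ≤ T * (1 / T * ⟪x - y, ∑ z, (gradient (fun u => f u z) x
          - gradient (fun u => f u z) y)⟫_ℝ) := by gcongr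
    _ = _ := by field_simp

theorem sum_sq_norm_sub_smul_gradient_sub_le {d T : ℕ} {W : Set (EuclideanSpace ℝ (Fin d))}
    {f : EuclideanSpace ℝ (Fin d) → Fin T → ℝ} {β lam η : ℝ}
    (hsmooth : ∀ z, ∀ x ∈ W, ∀ y ∈ W,
      ‖gradient (fun u => f u z) x - gradient (fun u => f u z) y‖ ≤ β * ‖x - y‖)
    (hmono : ∀ x ∈ W, ∀ y ∈ W, T * lam * ‖x - y‖ ^ 2
      ≤ ⟪x - y, ∑ z, (gradient (fun u => f u z) x - gradient (fun u => f u z) y)⟫_ℝ)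
    (hlam : 0 ≤ lam) (hη : 0 ≤ η) (hηβ : η * β ^ 2 ≤ lam / 2)
    {x y : EuclideanSpace ℝ (Fin d)} (hx : x ∈ W) (hy : y ∈ W) (σ : Equiv.Perm (Fin T))
    (K : Finset (Fin T)) (hK : #K * β ≤ T * lam / 2) :
    ∑ j ∈ Kᶜ, ‖(x - y) - η • (gradient (fun u => f u (σ j)) x
        - gradient (fun u => f u (σ j)) y)‖ ^ 2
      ≤ #Kᶜ * ((1 - lam * η / 4) ^ 2 * ‖x - y‖ ^ 2) := by
  set v : Fin T → EuclideanSpace ℝ (Fin d) := fun j =>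
    gradient (fun u => f u (σ j)) x - gradient (fun u => f u (σ j)) y
  have hv : ∀ j, ‖v j‖ ≤ β * ‖x - y‖ := fun j => hsmooth (σ j) x hx y hy
  have hsplit : ⟪x - y, ∑ j ∈ Kᶜ, v j⟫_ℝ + ⟪x - y, ∑ j ∈ K, v j⟫_ℝ
      = ⟪x - y, ∑ z, (gradient (fun u => f u z) x - gradient (fun u => f u z) y)⟫_ℝ := by
    rw [← inner_add_right, sum_compl_add_sum]
    exact congrArg _ (Equiv.sum_comp σ fun z =>
      gradient (fun u => f u z) x - gradient (fun u => f u z) y)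
  have hK_inner : ⟪x - y, ∑ j ∈ K, v j⟫_ℝ ≤ #K * (β * ‖x - y‖ ^ 2) := by
    rw [inner_sum, ← nsmul_eq_mul, ← sum_const]
    refine sum_le_sum fun j _ => (real_inner_le_norm _ _).trans ?_
    nlinarith [hv j, norm_nonneg (x - y)]
  have hcard : (#Kᶜ : ℝ) ≤ T := by
    exact_mod_cast (card_le_univ Kᶜ).trans_eq (Fintype.card_fin T)
  refine sum_norm_sub_smul_sq_le Kᶜ (x - y) v (fun j _ => hv j) ?_ hη hηβ
  nlinarith [hmono x hx y hy, sq_nonneg ‖x - y‖,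
    mul_nonneg (sub_nonneg.2 hK) (sq_nonneg ‖x - y‖),
    mul_nonneg (mul_nonneg (sub_nonneg.2 hcard) hlam) (sq_nonneg ‖x - y‖)]

section Iterates

variable {d : ℕ} {Z : Type*} {proj : EuclideanSpace ℝ (Fin d) → EuclideanSpace ℝ (Fin d)}
  {f : EuclideanSpace ℝ (Fin d) → Z → ℝ} {η : ℕ → ℝ} {w1 : EuclideanSpace ℝ (Fin d)}

theorem gdIter_congr {zs zs' : ℕ → Z} {m : ℕ} (h : ∀ r, 1 ≤ r → r ≤ m → zs r = zs' r) :
    gdIter proj f η zs w1 m = gdIter proj f η zs' w1 m := by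
  induction m with
  | zero => rfl
  | succ m ih =>
    rw [gdIter, gdIter, ih fun r h1 h2 => h r h1 (by omega), h (m + 1) (by omega) le_rfl]

theorem gdIter_mem {W : Set (EuclideanSpace ℝ (Fin d))} (hproj : ∀ x, proj x ∈ W)
    (hw1 : w1 ∈ W) (zs : ℕ → Z) : ∀ m, gdIter proj f η zs w1 m ∈ W
  | 0 => hw1
  | _ + 1 => hproj _

end Iterates

section RandomOrder

variable {d T : ℕ} (hT : 0 < T) {proj : EuclideanSpace ℝ (Fin d) → EuclideanSpace ℝ (Fin d)}
  {f : EuclideanSpace ℝ (Fin d) → Fin T → ℝ} {η : ℕ → ℝ} {w1 : EuclideanSpace ℝ (Fin d)}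

-- `𝐰[σ, m]` has consumed the data points `σ 0, …, σ (m - 1)`.
local notation "𝐰[" σ ", " m "]" => gdIter proj f η (ordSeq hT σ) w1 m

theorem ordSeq_of_le (σ : Equiv.Perm (Fin T)) {r : ℕ} (h1 : 1 ≤ r) (h2 : r ≤ T) :
    ordSeq hT σ r = σ ⟨r - 1, by omega⟩ := by
  simp only [ordSeq, Nat.mod_eq_of_lt (by omega : r - 1 < T)]

theorem gdIter_ordSeq_succ (σ : Equiv.Perm (Fin T)) {m : ℕ} (hm : m < T) :
    𝐰[σ, m + 1]
      = proj (𝐰[σ, m] - η (m + 1) • gradient (fun u => f u (σ ⟨m, hm⟩)) 𝐰[σ, m]) := by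
  rw [gdIter, ordSeq_of_le hT σ (by omega) hm]
  rfl

theorem gdIter_ordSeq_mul_of_forall_lt (σ π : Equiv.Perm (Fin T)) {m : ℕ} (hm : m ≤ T)
    (hπ : ∀ k : Fin T, (k : ℕ) < m → π k = k) : 𝐰[σ * π, m] = 𝐰[σ, m] :=
  gdIter_congr fun r h1 h2 => by
    rw [ordSeq_of_le hT _ h1 (by omega), ordSeq_of_le hT _ h1 (by omega), Equiv.Perm.mul_apply,
      hπ _ (by simp only; omega)]

theorem gdIter_ordSeq_mul_swap (σ : Equiv.Perm (Fin T)) {i j : Fin T} {m : ℕ} (hm : m ≤ T)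
    (hi : m ≤ i) (hj : m ≤ j) : 𝐰[σ * Equiv.swap i j, m] = 𝐰[σ, m] :=
  gdIter_ordSeq_mul_of_forall_lt hT σ _ hm fun k hk =>
    Equiv.swap_apply_of_ne_of_ne (by rintro rfl; omega) (by rintro rfl; omega)

variable {W : Set (EuclideanSpace ℝ (Fin d))}

theorem norm_gdIter_ordSeq_swap_sub_le (hW : Convex ℝ W)
    (hproj : ∀ x, proj x ∈ W ∧ ∀ w ∈ W, ‖x - proj x‖ ≤ ‖x - w‖) (hw1 : w1 ∈ W) {G : ℝ}
    (hLip : ∀ z, ∀ w ∈ W, ‖gradient (fun u => f u z) w‖ ≤ G) (σ : Equiv.Perm (Fin T))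
    {a b : Fin T} (hab : a ≤ b) :
    ‖𝐰[σ * Equiv.swap a b, a + 1] - 𝐰[σ, a + 1]‖ ≤ 2 * G * |η (a + 1)| := by
  have hsame : 𝐰[σ * Equiv.swap a b, a] = 𝐰[σ, a] :=
    gdIter_ordSeq_mul_swap hT σ a.is_lt.le le_rfl hab
  have hz : (σ * Equiv.swap a b) ⟨a, a.is_lt⟩ = σ b := by simp
  rw [gdIter_ordSeq_succ hT _ a.is_lt, gdIter_ordSeq_succ hT _ a.is_lt, hsame, hz]
  have hx : 𝐰[σ, a] ∈ W := gdIter_mem (fun y => (hproj y).1) hw1 _ _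
  set x := 𝐰[σ, a]
  calc _ ≤ ‖(x - η (a + 1) • gradient (fun u => f u (σ b)) x)
          - (x - η (a + 1) • gradient (fun u => f u (σ ⟨a, a.is_lt⟩)) x)‖ :=
        norm_proj_sub_proj_le hW hproj _ _
    _ = |η (a + 1)| * ‖gradient (fun u => f u (σ ⟨a, a.is_lt⟩)) x
          - gradient (fun u => f u (σ b)) x‖ := by
        rw [sub_sub_sub_cancel_left, ← smul_sub, norm_smul, Real.norm_eq_abs]
    _ ≤ |η (a + 1)| * (G + G) := by gcongr; exact norm_sub_le_of_le (hLip _ _ hx) (hLip _ _ hx)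
    _ = 2 * G * |η (a + 1)| := by ring

theorem norm_gdIter_ordSeq_succ_sub_le (hW : Convex ℝ W)
    (hproj : ∀ x, proj x ∈ W ∧ ∀ w ∈ W, ‖x - proj x‖ ≤ ‖x - w‖) (σ σ' : Equiv.Perm (Fin T))
    {m : ℕ} (hm : m < T) (hσ : σ' ⟨m, hm⟩ = σ ⟨m, hm⟩) :
    ‖𝐰[σ', m + 1] - 𝐰[σ, m + 1]‖
      ≤ ‖(𝐰[σ', m] - 𝐰[σ, m]) - η (m + 1) • (gradient (fun u => f u (σ ⟨m, hm⟩)) 𝐰[σ', m]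
          - gradient (fun u => f u (σ ⟨m, hm⟩)) 𝐰[σ, m])‖ := by
  rw [gdIter_ordSeq_succ hT _ hm, gdIter_ordSeq_succ hT _ hm, hσ, smul_sub, sub_sub_sub_comm]
  exact norm_proj_sub_proj_le hW hproj _ _

theorem sum_gdIter_ordSeq_swap_eq {a b p j : Fin T} {m : ℕ} (hm : m ≤ T) (hp : m ≤ p)
    (hj : m ≤ j) (hpa : p ≠ a) (hpb : p ≠ b) (hja : j ≠ a) (hjb : j ≠ b)
    (Φ : EuclideanSpace ℝ (Fin d) → EuclideanSpace ℝ (Fin d) → Fin T → ℝ) :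
    ∑ σ : Equiv.Perm (Fin T), Φ 𝐰[σ * Equiv.swap a b, m] 𝐰[σ, m] (σ p)
      = ∑ σ : Equiv.Perm (Fin T), Φ 𝐰[σ * Equiv.swap a b, m] 𝐰[σ, m] (σ j) := by
  have hcomm : Equiv.swap p j * Equiv.swap a b = Equiv.swap a b * Equiv.swap p j := by
    have h := Equiv.swap_apply_apply (Equiv.swap a b) p j
    rw [Equiv.swap_apply_of_ne_of_ne hpa hpb, Equiv.swap_apply_of_ne_of_ne hja hjb] at h
    exact eq_mul_inv_iff_mul_eq.mp h
  rw [← Equiv.sum_comp (Equiv.mulRight (Equiv.swap p j))]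
  refine sum_congr rfl fun σ _ => ?_
  simp only [Equiv.coe_mulRight]
  rw [mul_assoc, hcomm, ← mul_assoc, gdIter_ordSeq_mul_swap hT _ hm hp hj,
    gdIter_ordSeq_mul_swap hT _ hm hp hj, Equiv.Perm.mul_apply, Equiv.swap_apply_left]

theorem sum_sq_norm_coupled_gradient_step_le (hproj : ∀ x, proj x ∈ W) (hw1 : w1 ∈ W)
    {β lam : ℝ}
    (hsmooth : ∀ z, ∀ x ∈ W, ∀ y ∈ W,
      ‖gradient (fun u => f u z) x - gradient (fun u => f u z) y‖ ≤ β * ‖x - y‖)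
    (hmono : ∀ x ∈ W, ∀ y ∈ W, T * lam * ‖x - y‖ ^ 2
      ≤ ⟪x - y, ∑ z, (gradient (fun u => f u z) x - gradient (fun u => f u z) y)⟫_ℝ)
    (hlam : 0 ≤ lam) (hβ : 0 ≤ β) {a b : Fin T} {m : ℕ} (ham : a < m) (hmb : m < b)
    (hβm : (m + 1) * β ≤ T * lam / 2) (hη : 0 ≤ η (m + 1)) (hηβ : η (m + 1) * β ^ 2 ≤ lam / 2) :
    ∑ σ : Equiv.Perm (Fin T), ‖(𝐰[σ * Equiv.swap a b, m] - 𝐰[σ, m])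
        - η (m + 1) • (gradient (fun u => f u (σ ⟨m, by omega⟩)) 𝐰[σ * Equiv.swap a b, m]
          - gradient (fun u => f u (σ ⟨m, by omega⟩)) 𝐰[σ, m])‖ ^ 2
      ≤ (1 - lam * η (m + 1) / 4) ^ 2
          * ∑ σ : Equiv.Perm (Fin T), ‖𝐰[σ * Equiv.swap a b, m] - 𝐰[σ, m]‖ ^ 2 := by
  have hmT : m < T := by omega
  set p : Fin T := ⟨m, hmT⟩
  set s := Equiv.swap a b
  -- the positions already visited, together with `b`; the data at the remaining positions
  -- are exchangeable given both coupled trajectories up to time `m`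
  set K : Finset (Fin T) := insert b (Iio p)
  set Φ : EuclideanSpace ℝ (Fin d) → EuclideanSpace ℝ (Fin d) → Fin T → ℝ := fun x' x z =>
    ‖(x' - x) - η (m + 1) • (gradient (fun u => f u z) x' - gradient (fun u => f u z) x)‖ ^ 2
  have hKc : ∀ j ∈ Kᶜ, m ≤ j ∧ j ≠ b := fun j hj => by
    simp only [K, mem_compl, mem_insert, mem_Iio, not_or, Fin.lt_def, not_lt] at hj
    exact ⟨hj.2, hj.1⟩
  have hpK : p ∈ Kᶜ := by
    simp only [K, mem_compl, mem_insert, mem_Iio, not_or, lt_irrefl, not_false_eq_true, and_true]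
    exact fun h => by simp [p, ← h] at hmb
  have hK : (#K : ℝ) * β ≤ T * lam / 2 := by
    have : #K ≤ m + 1 := (card_insert_le _ _).trans (by rw [Fin.card_Iio])
    exact le_trans (by gcongr; exact_mod_cast this) hβm
  have hexch : ∀ j ∈ Kᶜ, ∑ σ : Equiv.Perm (Fin T), Φ 𝐰[σ * s, m] 𝐰[σ, m] (σ p)
      = ∑ σ : Equiv.Perm (Fin T), Φ 𝐰[σ * s, m] 𝐰[σ, m] (σ j) := by
    intro j hj
    obtain ⟨hmj, hjb⟩ := hKc j hj
    obtain ⟨hmp, hpb⟩ := hKc p hpK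
    exact sum_gdIter_ordSeq_swap_eq hT hmT.le hmp hmj
      (fun h => by rw [← h] at ham; exact lt_irrefl m ham) hpb
      (fun h => by rw [h] at hmj; omega) hjb Φ
  have havg : ∀ σ, ∑ j ∈ Kᶜ, Φ 𝐰[σ * s, m] 𝐰[σ, m] (σ j)
      ≤ #Kᶜ * ((1 - lam * η (m + 1) / 4) ^ 2 * ‖𝐰[σ * s, m] - 𝐰[σ, m]‖ ^ 2) := fun σ =>
    sum_sq_norm_sub_smul_gradient_sub_le hsmooth hmono hlam hη hηβ
      (gdIter_mem hproj hw1 _ _) (gdIter_mem hproj hw1 _ _) σ K hK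
  have hJ : (0 : ℝ) < #Kᶜ := by exact_mod_cast card_pos.2 ⟨p, hpK⟩
  refine le_of_mul_le_mul_left ?_ hJ
  calc (#Kᶜ : ℝ) * ∑ σ : Equiv.Perm (Fin T), Φ 𝐰[σ * s, m] 𝐰[σ, m] (σ p)
      = ∑ j ∈ Kᶜ, ∑ σ : Equiv.Perm (Fin T), Φ 𝐰[σ * s, m] 𝐰[σ, m] (σ j) := by
        rw [← nsmul_eq_mul, ← sum_const]; exact sum_congr rfl hexch
    _ = ∑ σ : Equiv.Perm (Fin T), ∑ j ∈ Kᶜ, Φ 𝐰[σ * s, m] 𝐰[σ, m] (σ j) := sum_comm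
    _ ≤ ∑ σ : Equiv.Perm (Fin T),
          #Kᶜ * ((1 - lam * η (m + 1) / 4) ^ 2 * ‖𝐰[σ * s, m] - 𝐰[σ, m]‖ ^ 2) :=
        sum_le_sum fun σ _ => havg σ
    _ = _ := by rw [← mul_sum, ← mul_sum]

theorem sum_sq_norm_gdIter_ordSeq_swap_sub_succ_le (hW : Convex ℝ W)
    (hproj : ∀ x, proj x ∈ W ∧ ∀ w ∈ W, ‖x - proj x‖ ≤ ‖x - w‖) (hw1 : w1 ∈ W) {β lam : ℝ}
    (hsmooth : ∀ z, ∀ x ∈ W, ∀ y ∈ W,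
      ‖gradient (fun u => f u z) x - gradient (fun u => f u z) y‖ ≤ β * ‖x - y‖)
    (hmono : ∀ x ∈ W, ∀ y ∈ W, T * lam * ‖x - y‖ ^ 2
      ≤ ⟪x - y, ∑ z, (gradient (fun u => f u z) x - gradient (fun u => f u z) y)⟫_ℝ)
    (hlam : 0 ≤ lam) (hβ : 0 ≤ β) {a b : Fin T} {m : ℕ} (ham : a < m) (hmb : m < b)
    (hβm : (m + 1) * β ≤ T * lam / 2) (hη : 0 ≤ η (m + 1)) (hηβ : η (m + 1) * β ^ 2 ≤ lam / 2) :
    ∑ σ : Equiv.Perm (Fin T), ‖𝐰[σ * Equiv.swap a b, m + 1] - 𝐰[σ, m + 1]‖ ^ 2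
      ≤ (1 - lam * η (m + 1) / 4) ^ 2
          * ∑ σ : Equiv.Perm (Fin T), ‖𝐰[σ * Equiv.swap a b, m] - 𝐰[σ, m]‖ ^ 2 := by
  have hmT : m < T := by omega
  refine le_trans (sum_le_sum fun σ _ => pow_le_pow_left₀ (norm_nonneg _)
    (norm_gdIter_ordSeq_succ_sub_le hT hW hproj σ _ hmT ?_) 2)
    (sum_sq_norm_coupled_gradient_step_le hT (fun x => (hproj x).1) hw1 hsmooth hmono hlam hβ
      ham hmb hβm hη hηβ)
  rw [Equiv.Perm.mul_apply, Equiv.swap_apply_of_ne_of_ne]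
  · exact fun h => by rw [← h] at ham; exact lt_irrefl m ham
  · exact fun h => by rw [← h] at hmb; exact lt_irrefl m hmb

theorem sum_sq_norm_gdIter_ordSeq_swap_sub_le (hW : Convex ℝ W)
    (hproj : ∀ x, proj x ∈ W ∧ ∀ w ∈ W, ‖x - proj x‖ ≤ ‖x - w‖) (hw1 : w1 ∈ W) {G β lam : ℝ}
    (hLip : ∀ z, ∀ w ∈ W, ‖gradient (fun u => f u z) w‖ ≤ G)
    (hsmooth : ∀ z, ∀ x ∈ W, ∀ y ∈ W,
      ‖gradient (fun u => f u z) x - gradient (fun u => f u z) y‖ ≤ β * ‖x - y‖)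
    (hmono : ∀ x ∈ W, ∀ y ∈ W, T * lam * ‖x - y‖ ^ 2
      ≤ ⟪x - y, ∑ z, (gradient (fun u => f u z) x - gradient (fun u => f u z) y)⟫_ℝ)
    (hlam : 0 ≤ lam) (hβ : 0 ≤ β) (hη : ∀ r, 0 ≤ η r) (hηβ : ∀ r, η r * β ^ 2 ≤ lam / 2)
    {a b : Fin T} (hab : a < b) (hβb : b * β ≤ T * lam / 2) {m : ℕ} (ham : a + 1 ≤ m)
    (hmb : m ≤ b) :
    ∑ σ : Equiv.Perm (Fin T), ‖𝐰[σ * Equiv.swap a b, m] - 𝐰[σ, m]‖ ^ 2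
      ≤ T ! * (2 * G * η ((a : ℕ) + 1) * ∏ r ∈ Icc ((a : ℕ) + 2) m, (1 - lam * η r / 4)) ^ 2 := by
  induction m, ham using Nat.le_induction with
  | base =>
    rw [Icc_eq_empty (by omega), prod_empty, mul_one]
    calc _ ≤ ∑ _σ : Equiv.Perm (Fin T), (2 * G * η ((a : ℕ) + 1)) ^ 2 := by
          gcongr with σ
          simpa only [abs_of_nonneg (hη _)] using
            norm_gdIter_ordSeq_swap_sub_le hT (η := η) hW hproj hw1 hLip σ hab.le
      _ = _ := by
          simp only [sum_const, card_univ, Fintype.card_perm, Fintype.card_fin, nsmul_eq_mul]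
  | succ m ham ih =>
    have hβm : ((m : ℝ) + 1) * β ≤ T * lam / 2 :=
      le_trans (by gcongr; exact_mod_cast hmb) hβb
    calc _ ≤ (1 - lam * η (m + 1) / 4) ^ 2
            * ∑ σ : Equiv.Perm (Fin T), ‖𝐰[σ * Equiv.swap a b, m] - 𝐰[σ, m]‖ ^ 2 :=
          sum_sq_norm_gdIter_ordSeq_swap_sub_succ_le hT hW hproj hw1 hsmooth hmono hlam hβ
            (by omega) (by omega) hβm (hη _) (hηβ _)
      _ ≤ (1 - lam * η (m + 1) / 4) ^ 2
            * (T ! * (2 * G * η ((a : ℕ) + 1)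
              * ∏ r ∈ Icc ((a : ℕ) + 2) m, (1 - lam * η r / 4)) ^ 2) := by
          gcongr; exact ih (by omega)
      _ = _ := by rw [prod_Icc_succ_top (by omega)]; ring

theorem sum_norm_gdIter_ordSeq_swap_sub_le (hW : Convex ℝ W)
    (hproj : ∀ x, proj x ∈ W ∧ ∀ w ∈ W, ‖x - proj x‖ ≤ ‖x - w‖) (hw1 : w1 ∈ W) {G β lam : ℝ}
    (hG : 0 ≤ G) (hLip : ∀ z, ∀ w ∈ W, ‖gradient (fun u => f u z) w‖ ≤ G)
    (hsmooth : ∀ z, ∀ x ∈ W, ∀ y ∈ W,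
      ‖gradient (fun u => f u z) x - gradient (fun u => f u z) y‖ ≤ β * ‖x - y‖)
    (hmono : ∀ x ∈ W, ∀ y ∈ W, T * lam * ‖x - y‖ ^ 2
      ≤ ⟪x - y, ∑ z, (gradient (fun u => f u z) x - gradient (fun u => f u z) y)⟫_ℝ)
    (hlam : 0 ≤ lam) (hβ : 0 ≤ β) (hη : ∀ r, 0 ≤ η r) (hηβ : ∀ r, η r * β ^ 2 ≤ lam / 2)
    (hηlam : ∀ r, lam * η r ≤ 4) {a b : Fin T} (hab : a < b) (hβb : b * β ≤ T * lam / 2) :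
    ∑ σ : Equiv.Perm (Fin T), ‖𝐰[σ * Equiv.swap a b, b] - 𝐰[σ, b]‖
      ≤ T ! * (2 * G * η ((a : ℕ) + 1) * ∏ r ∈ Icc ((a : ℕ) + 2) b, (1 - lam * η r / 4)) := by
  have hbound : 0 ≤ 2 * G * η ((a : ℕ) + 1) * ∏ r ∈ Icc ((a : ℕ) + 2) b, (1 - lam * η r / 4) :=
    mul_nonneg (by have := hη ((a : ℕ) + 1); positivity)
      (prod_nonneg fun r _ => by linarith [hηlam r])
  refine le_of_pow_le_pow_left₀ two_ne_zero (by positivity) ?_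
  calc (∑ σ : Equiv.Perm (Fin T), ‖𝐰[σ * Equiv.swap a b, b] - 𝐰[σ, b]‖) ^ 2
      ≤ T ! * ∑ σ : Equiv.Perm (Fin T), ‖𝐰[σ * Equiv.swap a b, b] - 𝐰[σ, b]‖ ^ 2 := by
        simpa only [card_univ, Fintype.card_perm, Fintype.card_fin] using
          sq_sum_le_card_mul_sum_sq (s := univ)
            (f := fun σ : Equiv.Perm (Fin T) => ‖𝐰[σ * Equiv.swap a b, b] - 𝐰[σ, b]‖)
    _ ≤ T ! * (T ! * (2 * G * η ((a : ℕ) + 1)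
          * ∏ r ∈ Icc ((a : ℕ) + 2) b, (1 - lam * η r / 4)) ^ 2) := by
        gcongr
        exact sum_sq_norm_gdIter_ordSeq_swap_sub_le hT hW hproj hw1 hLip hsmooth hmono hlam hβ
          hη hηβ hab hβb hab le_rfl
    _ = _ := by ring

theorem sum_sum_norm_gdIter_ordSeq_swap_sub_le (hW : Convex ℝ W)
    (hproj : ∀ x, proj x ∈ W ∧ ∀ w ∈ W, ‖x - proj x‖ ≤ ‖x - w‖) (hw1 : w1 ∈ W) {G β lam : ℝ}
    (hG : 0 ≤ G) (hLip : ∀ z, ∀ w ∈ W, ‖gradient (fun u => f u z) w‖ ≤ G)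
    (hsmooth : ∀ z, ∀ x ∈ W, ∀ y ∈ W,
      ‖gradient (fun u => f u z) x - gradient (fun u => f u z) y‖ ≤ β * ‖x - y‖)
    (hmono : ∀ x ∈ W, ∀ y ∈ W, T * lam * ‖x - y‖ ^ 2
      ≤ ⟪x - y, ∑ z, (gradient (fun u => f u z) x - gradient (fun u => f u z) y)⟫_ℝ)
    (hlam : 0 < lam) (hβ : 0 ≤ β) (hη : ∀ r, 0 ≤ η r) (hηβ : ∀ r, η r * β ^ 2 ≤ lam / 2)
    (hηlam : ∀ r, lam * η r ≤ 4) (b : Fin T) (hβb : b * β ≤ T * lam / 2) :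
    ∑ a : Fin T, ∑ σ : Equiv.Perm (Fin T), ‖𝐰[σ * Equiv.swap a b, b] - 𝐰[σ, b]‖
      ≤ T ! * (2 * G * (4 / lam)) := by
  have hlate : ∀ a ∉ Iio b,
      ∑ σ : Equiv.Perm (Fin T), ‖𝐰[σ * Equiv.swap a b, b] - 𝐰[σ, b]‖ = 0 := fun a ha => by
    refine sum_eq_zero fun σ _ => ?_
    have hba : b ≤ a := not_lt.1 (mem_Iio.not.1 ha)
    rw [gdIter_ordSeq_mul_swap hT σ b.is_lt.le hba le_rfl, sub_self, norm_zero]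
  rw [← sum_subset (subset_univ _) fun a _ ha => hlate a ha]
  calc ∑ a ∈ Iio b, ∑ σ : Equiv.Perm (Fin T), ‖𝐰[σ * Equiv.swap a b, b] - 𝐰[σ, b]‖
      ≤ ∑ a ∈ Iio b, T ! * (2 * G * η ((a : ℕ) + 1)
          * ∏ r ∈ Icc ((a : ℕ) + 2) b, (1 - lam * η r / 4)) :=
        sum_le_sum fun a ha => sum_norm_gdIter_ordSeq_swap_sub_le hT hW hproj hw1 hG hLip hsmooth
          hmono hlam.le hβ hη hηβ hηlam (mem_Iio.1 ha) hβb
    _ = T ! * (2 * G * ∑ q ∈ range b, η (q + 1) * ∏ r ∈ Icc (q + 2) b, (1 - lam * η r / 4)) := by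
        rw [← Nat.Iio_eq_range, ← Fin.map_valEmbedding_Iio, sum_map, mul_sum, mul_sum]
        simp only [Fin.valEmbedding_apply, mul_assoc]
    _ ≤ T ! * (2 * G * (4 / lam)) := by
        gcongr
        exact sum_mul_prod_one_sub_le hlam hηlam b

end RandomOrder

/-- (Lemma 4.5 of the paper.)  For SGD without replacement with step
sizes `η_t = min{λ/(2β²), 4/(λ t)}`, run for `τ = T/(2κ)` rounds (`κ = β/λ`), the
gradient-bias error at every round `t ≤ τ` satisfies
`E[⟨∇F(w_t) - ∇f(w_t; z_t), w_t - w*⟩] ≤ 8G(G + βD)/(λT)`.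
The iterate is `w_t = gdIter … (t-1)`, `z_t = σ(t)`, and the expectation is the average
over all permutations `σ`. -/
theorem sgd_without_replacement_gradient_bias
    {d : ℕ} (T : ℕ) (hT1 : 1 ≤ T)
    (W : Set (EuclideanSpace ℝ (Fin d))) (hWconv : Convex ℝ W)
    (D : ℝ) (hD : 0 ≤ D) (hdiam : ∀ x ∈ W, ∀ y ∈ W, ‖x - y‖ ≤ D)
    (proj : EuclideanSpace ℝ (Fin d) → EuclideanSpace ℝ (Fin d))
    (hproj : ∀ x, proj x ∈ W ∧ ∀ w ∈ W, ‖x - proj x‖ ≤ ‖x - w‖)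
    (f : EuclideanSpace ℝ (Fin d) → Fin T → ℝ)
    (G β lam : ℝ) (hG : 0 < G) (hβ : 0 < β) (hlam : 0 < lam)
    (hdiff : ∀ z, Differentiable ℝ (fun w => f w z))
    (hLip : ∀ z, ∀ w ∈ W, ‖gradient (fun u => f u z) w‖ ≤ G)
    (hsmooth : ∀ z, ∀ x ∈ W, ∀ y ∈ W,
      ‖gradient (fun u => f u z) x - gradient (fun u => f u z) y‖ ≤ β * ‖x - y‖)
    (hstrong : StrongConvexOnSet W lam (fun w => (1 / T : ℝ) * ∑ z : Fin T, f w z))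
    (wstar : EuclideanSpace ℝ (Fin d)) (hws : wstar ∈ W)
    (η : ℕ → ℝ) (hη : ∀ t : ℕ, η t = min (lam / (2 * β ^ 2)) (4 / (lam * t)))
    (w1 : EuclideanSpace ℝ (Fin d)) (hw1 : w1 ∈ W)
    -- round `t ≤ τ = T/(2κ)`
    (t : ℕ) (ht1 : 1 ≤ t) (htT : t ≤ T) (htτ : (t : ℝ) ≤ (T : ℝ) / (2 * (β / lam))) :
    (∑ σ : Equiv.Perm (Fin T),
        (inner ℝ
          (gradient (fun u => (1 / T : ℝ) * ∑ z : Fin T, f u z)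
              (gdIter proj f η (ordSeq (by omega) σ) w1 (t - 1))
            - gradient (fun u => f u (ordSeq (by omega) σ t))
              (gdIter proj f η (ordSeq (by omega) σ) w1 (t - 1)))
          (gdIter proj f η (ordSeq (by omega) σ) w1 (t - 1) - wstar) : ℝ))
      / (Nat.factorial T : ℝ)
    ≤ 8 * G * (G + β * D) / (lam * T) := by
  have hT : 0 < T := hT1
  set b : Fin T := ⟨t - 1, by omega⟩
  have hβb : (b : ℝ) * β ≤ T * lam / 2 :=
    le_trans (by gcongr; exact_mod_cast Nat.sub_le t 1) (mul_le_of_le_div_two_mul_div hβ hlam htτ)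
  have hcoupling := sum_sum_norm_gdIter_ordSeq_swap_sub_le hT hWconv hproj hw1 hG.le hLip hsmooth
    (fun x hx y hy => hstrong.mul_sq_le_inner_sum_gradient_sub hdiff hT.ne' hx hy) hlam hβ.le
    (step_nonneg hlam hη) (step_mul_sq_le hβ hη) (mul_step_le_four hlam hη) b hβb
  simp only [ordSeq_of_le hT _ ht1 htT]
  rw [div_le_iff₀ (by positivity)]
  calc _ ≤ 1 / T * (G + β * D) * ∑ j : Fin T, ∑ σ : Equiv.Perm (Fin T),
          ‖gdIter proj f η (ordSeq hT (σ * Equiv.swap j b)) w1 b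
            - gdIter proj f η (ordSeq hT σ) w1 b‖ :=
        sum_perm_inner_gradient_avg_sub_le hdiff hLip hsmooth hdiam
          (fun σ => gdIter_mem (fun y => (hproj y).1) hw1 _ _) b hws
    _ ≤ 1 / T * (G + β * D) * (T ! * (2 * G * (4 / lam))) := by gcongr
    _ = 8 * G * (G + β * D) / (lam * T) * T ! := by field_simp; ring
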